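/- For each integer k ≥ 1 define ψ_k : [−1,1] → ℝ by ψ_k(σ) = cos(kπσ/2) if k is odd and ψ_k(σ) = sin(kπσ/2) if k is even. Then for all integers k, l ≥ 1: (i) if k = l, or if k and l have opposite parity, then ∫_{−1}^{1} ψ_k(σ)·( σ·ψ_l′(σ) + (1/2)·ψ_l(σ) ) dσ = 0; (ii) if k ≠ l and k ≡ l (mod 2), then ∫_{−1}^{1} ψ_k(σ)·( σ·ψ_l′(σ) + (1/2)·ψ_l(σ) ) dσ = (−1)^{(k+l)/2 + k} · 2kl/(l² − k²). -/

import Mathlib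

open MeasureTheory Real intervalIntegral

/-- The Dirichlet eigenfunctions of `−d²/dσ²` on `[−1,1]`:
`ψ_k(σ) = cos(kπσ/2)` for odd `k`, `ψ_k(σ) = sin(kπσ/2)` for even `k`. -/
noncomputable def psi (k : ℕ) (σ : ℝ) : ℝ :=
  if Odd k then Real.cos (k * Real.pi * σ / 2) else Real.sin (k * Real.pi * σ / 2)

section Helpers

private lemma hlin (c σ : ℝ) : HasDerivAt (fun x : ℝ => c * x) c σ := by
  simpa using (hasDerivAt_id σ).const_mul c

private lemma hsin (c σ : ℝ) :
    HasDerivAt (fun x : ℝ => Real.sin (c * x)) (c * Real.cos (c * σ)) σ := by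
  exact ((Real.hasDerivAt_sin (c * σ)).comp σ (hlin c σ)).congr_deriv (mul_comm _ _)

private lemma hcos (c σ : ℝ) :
    HasDerivAt (fun x : ℝ => Real.cos (c * x)) (-(c * Real.sin (c * σ))) σ := by
  exact ((Real.hasDerivAt_cos (c * σ)).comp σ (hlin c σ)).congr_deriv (by ring)

private lemma hA (c : ℝ) (hc : c ≠ 0) (σ : ℝ) :
    HasDerivAt (fun x : ℝ => (Real.sin (c * x) - c * x * Real.cos (c * x)) / c ^ 2)
      (σ * Real.sin (c * σ)) σ := by
  have h := ((hsin c σ).sub (((hlin c σ).mul (hcos c σ)))).div_const (c ^ 2)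
  refine h.congr_deriv ?_
  field_simp
  ring

private lemma hB (c : ℝ) (hc : c ≠ 0) (σ : ℝ) :
    HasDerivAt (fun x : ℝ => (Real.cos (c * x) + c * x * Real.sin (c * x)) / c ^ 2)
      (σ * Real.cos (c * σ)) σ := by
  have h := ((hcos c σ).add (((hlin c σ).mul (hsin c σ)))).div_const (c ^ 2)
  refine h.congr_deriv ?_
  field_simp
  ring

private lemma hC (c : ℝ) (hc : c ≠ 0) (σ : ℝ) :
    HasDerivAt (fun x : ℝ => Real.sin (c * x) / c) (Real.cos (c * σ)) σ := by
  have h := (hsin c σ).div_const c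
  refine h.congr_deriv ?_
  field_simp

private lemma hD (c : ℝ) (hc : c ≠ 0) (σ : ℝ) :
    HasDerivAt (fun x : ℝ => -(Real.cos (c * x) / c)) (Real.sin (c * σ)) σ := by
  have h := ((hcos c σ).div_const c).neg
  refine h.congr_deriv ?_
  field_simp

private lemma int_oo (a b p q : ℝ) (hp : p ≠ 0) (hq : q ≠ 0) (hpe : p = a + b)
    (hqe : q = b - a) :
    ∫ σ in (-1:ℝ)..1,
        Real.cos (a * σ) * (σ * (-(b * Real.sin (b * σ))) + (1/2) * Real.cos (b * σ))
      = -b * ((Real.sin p - p * Real.cos p) / p ^ 2 + (Real.sin q - q * Real.cos q) / q ^ 2)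
        + (1/2) * (Real.sin q / q + Real.sin p / p) := by
  have key : ∀ σ : ℝ,
      HasDerivAt (fun x : ℝ =>
        (-(b/2)) * ((Real.sin (p * x) - p * x * Real.cos (p * x)) / p ^ 2
            + (Real.sin (q * x) - q * x * Real.cos (q * x)) / q ^ 2)
          + (1/4) * (Real.sin (q * x) / q + Real.sin (p * x) / p))
        (Real.cos (a * σ) * (σ * (-(b * Real.sin (b * σ))) + (1/2) * Real.cos (b * σ))) σ := by
    intro σ
    have h := (((hA p hp σ).add (hA q hq σ)).const_mul (-(b/2))).add
      (((hC q hq σ).add (hC p hp σ)).const_mul (1/4))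
    refine h.congr_deriv ?_
    rw [hpe, hqe, show (a + b) * σ = a * σ + b * σ by ring,
      show (b - a) * σ = b * σ - a * σ by ring,
      Real.sin_add, Real.cos_add, Real.sin_sub, Real.cos_sub]
    ring
  rw [intervalIntegral.integral_eq_sub_of_hasDerivAt (fun σ _ => key σ)
    ((Continuous.intervalIntegrable (by fun_prop) _ _))]
  simp only [mul_one, mul_neg_one, Real.sin_neg, Real.cos_neg]
  ring

private lemma int_ee (a b p q : ℝ) (hp : p ≠ 0) (hq : q ≠ 0) (hpe : p = a + b)
    (hqe : q = b - a) :
    ∫ σ in (-1:ℝ)..1,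
        Real.sin (a * σ) * (σ * (b * Real.cos (b * σ)) + (1/2) * Real.sin (b * σ))
      = b * ((Real.sin p - p * Real.cos p) / p ^ 2 - (Real.sin q - q * Real.cos q) / q ^ 2)
        + (1/2) * (Real.sin q / q - Real.sin p / p) := by
  have key : ∀ σ : ℝ,
      HasDerivAt (fun x : ℝ =>
        (b/2) * ((Real.sin (p * x) - p * x * Real.cos (p * x)) / p ^ 2
            - (Real.sin (q * x) - q * x * Real.cos (q * x)) / q ^ 2)
          + (1/4) * (Real.sin (q * x) / q - Real.sin (p * x) / p))
        (Real.sin (a * σ) * (σ * (b * Real.cos (b * σ)) + (1/2) * Real.sin (b * σ))) σ := by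
    intro σ
    have h := (((hA p hp σ).sub (hA q hq σ)).const_mul (b/2)).add
      (((hC q hq σ).sub (hC p hp σ)).const_mul (1/4))
    refine h.congr_deriv ?_
    rw [hpe, hqe, show (a + b) * σ = a * σ + b * σ by ring,
      show (b - a) * σ = b * σ - a * σ by ring,
      Real.sin_add, Real.cos_add, Real.sin_sub, Real.cos_sub]
    ring
  rw [intervalIntegral.integral_eq_sub_of_hasDerivAt (fun σ _ => key σ)
    ((Continuous.intervalIntegrable (by fun_prop) _ _))]
  simp only [mul_one, mul_neg_one, Real.sin_neg, Real.cos_neg]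
  ring

private lemma int_oe (a b p q : ℝ) (hp : p ≠ 0) (hq : q ≠ 0) (hpe : p = a + b)
    (hqe : q = b - a) :
    ∫ σ in (-1:ℝ)..1,
        Real.cos (a * σ) * (σ * (b * Real.cos (b * σ)) + (1/2) * Real.sin (b * σ)) = 0 := by
  have key : ∀ σ : ℝ,
      HasDerivAt (fun x : ℝ =>
        (b/2) * ((Real.cos (p * x) + p * x * Real.sin (p * x)) / p ^ 2
            + (Real.cos (q * x) + q * x * Real.sin (q * x)) / q ^ 2)
          + (1/4) * (-(Real.cos (p * x) / p) + -(Real.cos (q * x) / q)))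
        (Real.cos (a * σ) * (σ * (b * Real.cos (b * σ)) + (1/2) * Real.sin (b * σ))) σ := by
    intro σ
    have h := (((hB p hp σ).add (hB q hq σ)).const_mul (b/2)).add
      (((hD p hp σ).add (hD q hq σ)).const_mul (1/4))
    refine h.congr_deriv ?_
    rw [hpe, hqe, show (a + b) * σ = a * σ + b * σ by ring,
      show (b - a) * σ = b * σ - a * σ by ring,
      Real.sin_add, Real.cos_add, Real.sin_sub, Real.cos_sub]
    ring
  rw [intervalIntegral.integral_eq_sub_of_hasDerivAt (fun σ _ => key σ)
    ((Continuous.intervalIntegrable (by fun_prop) _ _))]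
  simp only [mul_one, mul_neg_one, Real.sin_neg, Real.cos_neg]
  ring

private lemma int_eo (a b p q : ℝ) (hp : p ≠ 0) (hq : q ≠ 0) (hpe : p = a + b)
    (hqe : q = b - a) :
    ∫ σ in (-1:ℝ)..1,
        Real.sin (a * σ) * (σ * (-(b * Real.sin (b * σ))) + (1/2) * Real.cos (b * σ)) = 0 := by
  have key : ∀ σ : ℝ,
      HasDerivAt (fun x : ℝ =>
        (-(b/2)) * ((Real.cos (q * x) + q * x * Real.sin (q * x)) / q ^ 2
            - (Real.cos (p * x) + p * x * Real.sin (p * x)) / p ^ 2)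
          + (1/4) * (-(Real.cos (p * x) / p) - -(Real.cos (q * x) / q)))
        (Real.sin (a * σ) * (σ * (-(b * Real.sin (b * σ))) + (1/2) * Real.cos (b * σ))) σ := by
    intro σ
    have h := (((hB q hq σ).sub (hB p hp σ)).const_mul (-(b/2))).add
      (((hD p hp σ).sub (hD q hq σ)).const_mul (1/4))
    refine h.congr_deriv ?_
    rw [hpe, hqe, show (a + b) * σ = a * σ + b * σ by ring,
      show (b - a) * σ = b * σ - a * σ by ring,
      Real.sin_add, Real.cos_add, Real.sin_sub, Real.cos_sub]
    ring
  rw [intervalIntegral.integral_eq_sub_of_hasDerivAt (fun σ _ => key σ)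
    ((Continuous.intervalIntegrable (by fun_prop) _ _))]
  simp only [mul_one, mul_neg_one, Real.sin_neg, Real.cos_neg]
  ring

private lemma int_od (a : ℝ) :
    ∫ σ in (-1:ℝ)..1,
        Real.cos (a * σ) * (σ * (-(a * Real.sin (a * σ))) + (1/2) * Real.cos (a * σ))
      = Real.cos a ^ 2 := by
  have key : ∀ σ : ℝ,
      HasDerivAt (fun x : ℝ => x * Real.cos (a * x) ^ 2 / 2)
        (Real.cos (a * σ) * (σ * (-(a * Real.sin (a * σ))) + (1/2) * Real.cos (a * σ))) σ := by
    intro σ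
    have h := ((hasDerivAt_id σ).mul ((hcos a σ).pow 2)).div_const 2
    refine h.congr_deriv ?_
    simp only [id_eq, Nat.cast_ofNat, pow_one, Pi.pow_apply]
    ring
  rw [intervalIntegral.integral_eq_sub_of_hasDerivAt (fun σ _ => key σ)
    ((Continuous.intervalIntegrable (by fun_prop) _ _))]
  simp only [mul_one, mul_neg_one, Real.sin_neg, Real.cos_neg]
  ring

private lemma int_ed (a : ℝ) :
    ∫ σ in (-1:ℝ)..1,
        Real.sin (a * σ) * (σ * (a * Real.cos (a * σ)) + (1/2) * Real.sin (a * σ))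
      = Real.sin a ^ 2 := by
  have key : ∀ σ : ℝ,
      HasDerivAt (fun x : ℝ => x * Real.sin (a * x) ^ 2 / 2)
        (Real.sin (a * σ) * (σ * (a * Real.cos (a * σ)) + (1/2) * Real.sin (a * σ))) σ := by
    intro σ
    have h := ((hasDerivAt_id σ).mul ((hsin a σ).pow 2)).div_const 2
    refine h.congr_deriv ?_
    simp only [id_eq, Nat.cast_ofNat, pow_one, Pi.pow_apply]
    ring
  rw [intervalIntegral.integral_eq_sub_of_hasDerivAt (fun σ _ => key σ)
    ((Continuous.intervalIntegrable (by fun_prop) _ _))]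
  simp only [mul_one, mul_neg_one, Real.sin_neg, Real.cos_neg]
  ring

private lemma psi_eq_odd (k : ℕ) (h : Odd k) :
    psi k = fun σ => Real.cos ((k : ℝ) * Real.pi / 2 * σ) := by
  funext σ
  rw [psi, if_pos h]
  congr 1
  ring

private lemma psi_eq_even (k : ℕ) (h : Even k) :
    psi k = fun σ => Real.sin ((k : ℝ) * Real.pi / 2 * σ) := by
  funext σ
  rw [psi, if_neg (Nat.not_odd_iff_even.mpr h)]
  congr 1
  ring

private lemma deriv_psi_odd (l : ℕ) (h : Odd l) :
    deriv (psi l) = fun σ => -((l : ℝ) * Real.pi / 2 * Real.sin ((l : ℝ) * Real.pi / 2 * σ)) := by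
  funext σ
  rw [psi_eq_odd l h]
  exact (hcos _ σ).deriv

private lemma deriv_psi_even (l : ℕ) (h : Even l) :
    deriv (psi l) = fun σ => (l : ℝ) * Real.pi / 2 * Real.cos ((l : ℝ) * Real.pi / 2 * σ) := by
  funext σ
  rw [psi_eq_even l h]
  exact (hsin _ σ).deriv

private lemma cos_neg_one_zpow (n : ℤ) : Real.cos ((n : ℝ) * Real.pi) = (-1 : ℝ) ^ n := by
  simpa using Real.cos_int_mul_pi_sub 0 n

end Helpers

/-- matrix elements `⟨ψ_k, iAψ_l⟩ = ∫_{−1}^1 ψ_k (σψ_l′ + ψ_l/2) dσ` of the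
generator of dilations on `[−1,1]` in the Dirichlet eigenbasis: they vanish when `k = l`
or when `k` and `l` have opposite parity, and equal
`(−1)^{(k+l)/2 + k} · 2kl/(l² − k²)` when `k ≠ l` and `k ≡ l (mod 2)`. -/
theorem statement7 (k l : ℕ) (hk : 1 ≤ k) (hl : 1 ≤ l) :
    ((k = l ∨ k % 2 ≠ l % 2) →
      ∫ σ in (-1 : ℝ)..1, psi k σ * (σ * deriv (psi l) σ + (1 / 2) * psi l σ) = 0) ∧
    (k ≠ l → k % 2 = l % 2 →
      ∫ σ in (-1 : ℝ)..1, psi k σ * (σ * deriv (psi l) σ + (1 / 2) * psi l σ)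
        = (-1 : ℝ) ^ ((k + l) / 2 + k) * (2 * k * l) / ((l : ℝ) ^ 2 - (k : ℝ) ^ 2)) := by
  have hπ := Real.pi_ne_zero
  have hkR : (1:ℝ) ≤ (k:ℝ) := by exact_mod_cast hk
  have hlR : (1:ℝ) ≤ (l:ℝ) := by exact_mod_cast hl
  have hkl0 : (k:ℝ) + l ≠ 0 := by linarith
  have hp0 : ((k:ℝ) * π / 2 + (l:ℝ) * π / 2) ≠ 0 := by
    have : (k:ℝ) * π / 2 + (l:ℝ) * π / 2 = ((k:ℝ) + l) / 2 * π := by ring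
    rw [this]
    exact mul_ne_zero (div_ne_zero hkl0 two_ne_zero) hπ
  have hq0 : ∀ _ : k ≠ l, ((l:ℝ) * π / 2 - (k:ℝ) * π / 2) ≠ 0 := by
    intro hne
    have hlk : (l:ℝ) - k ≠ 0 := sub_ne_zero.mpr (by exact_mod_cast hne.symm)
    have : (l:ℝ) * π / 2 - (k:ℝ) * π / 2 = ((l:ℝ) - k) / 2 * π := by ring
    rw [this]
    exact mul_ne_zero (div_ne_zero hlk two_ne_zero) hπ
  rcases Nat.even_or_odd k with hke | hko <;> rcases Nat.even_or_odd l with hle | hlo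
  -- k even, l even
  · have hk2 := Nat.even_iff.mp hke
    have hl2 := Nat.even_iff.mp hle
    have hfun : (fun σ : ℝ => psi k σ * (σ * deriv (psi l) σ + (1 / 2) * psi l σ))
        = fun σ : ℝ => Real.sin ((k:ℝ) * π / 2 * σ) *
            (σ * ((l:ℝ) * π / 2 * Real.cos ((l:ℝ) * π / 2 * σ))
              + (1/2) * Real.sin ((l:ℝ) * π / 2 * σ)) := by
      funext σ
      rw [deriv_psi_even l hle, psi_eq_even k hke, psi_eq_even l hle]
    constructor
    · rintro (rfl | hpar)
      · rw [hfun, int_ed]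
        obtain ⟨j, hj⟩ := hke
        have hcast : (k:ℝ) * π / 2 = (j:ℝ) * π := by push_cast [hj]; ring
        rw [hcast, Real.sin_nat_mul_pi]
        norm_num
      · omega
    · intro hne hpar
      have hdvd : 2 ∣ k + l := by omega
      have hm2 : (k + l) / 2 * 2 = k + l := Nat.div_mul_cancel hdvd
      have hmR : (((k + l) / 2 : ℕ) : ℝ) = ((k:ℝ) + l) / 2 := by
        field_simp
        exact_mod_cast hm2

      have hnR : (((((k + l) / 2 : ℕ) : ℤ) - (k : ℤ) : ℤ) : ℝ) = ((l:ℝ) - k) / 2 := by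
        rw [Int.cast_sub, Int.cast_natCast, Int.cast_natCast, hmR]
        ring
      have hlk : (l:ℝ) - k ≠ 0 := sub_ne_zero.mpr (by exact_mod_cast hne.symm)
      have hpm : ((((k + l) / 2 : ℕ) : ℝ)) * π ≠ 0 :=
        mul_ne_zero (by rw [hmR]; exact div_ne_zero hkl0 two_ne_zero) hπ
      have hqn : (((((k + l) / 2 : ℕ) : ℤ) - (k : ℤ) : ℤ) : ℝ) * π ≠ 0 :=
        mul_ne_zero (by rw [hnR]; exact div_ne_zero hlk two_ne_zero) hπ
      have hpe : ((((k + l) / 2 : ℕ) : ℝ)) * π = (k:ℝ) * π / 2 + (l:ℝ) * π / 2 := by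
        rw [hmR]; ring
      have hqe : (((((k + l) / 2 : ℕ) : ℤ) - (k : ℤ) : ℤ) : ℝ) * π
          = (l:ℝ) * π / 2 - (k:ℝ) * π / 2 := by
        rw [hnR]; ring
      have hsm : Real.sin ((((k + l) / 2 : ℕ) : ℝ) * π) = 0 := Real.sin_nat_mul_pi _
      have hcm : Real.cos ((((k + l) / 2 : ℕ) : ℝ) * π) = (-1 : ℝ) ^ ((k + l) / 2) := by
        simpa using Real.cos_nat_mul_pi_sub 0 ((k + l) / 2)
      have hsn : Real.sin ((((((k + l) / 2 : ℕ) : ℤ) - (k : ℤ) : ℤ) : ℝ) * π) = 0 :=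
        Real.sin_int_mul_pi _
      have hcn : Real.cos ((((((k + l) / 2 : ℕ) : ℤ) - (k : ℤ) : ℤ) : ℝ) * π)
          = (-1 : ℝ) ^ ((k + l) / 2) * (-1 : ℝ) ^ k := by
        rw [cos_neg_one_zpow, zpow_sub₀ (by norm_num : (-1:ℝ) ≠ 0), zpow_natCast, zpow_natCast,
          div_eq_mul_inv, ← inv_pow, inv_neg, inv_one]
      have hden : (l:ℝ) ^ 2 - (k:ℝ) ^ 2 ≠ 0 := by
        have h : (l:ℝ) ^ 2 - (k:ℝ) ^ 2 = ((l:ℝ) - k) * ((k:ℝ) + l) := by ring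
        rw [h]
        exact mul_ne_zero hlk hkl0
      rw [hfun, int_ee _ _ _ _ hpm hqn hpe hqe, hsm, hcm, hsn, hcn, hmR, hnR,
        pow_add, Even.neg_one_pow hke]
      field_simp
      ring
  -- k even, l odd
  · have hk2 := Nat.even_iff.mp hke
    have hl2 := Nat.odd_iff.mp hlo
    have hfun : (fun σ : ℝ => psi k σ * (σ * deriv (psi l) σ + (1 / 2) * psi l σ))
        = fun σ : ℝ => Real.sin ((k:ℝ) * π / 2 * σ) *
            (σ * (-((l:ℝ) * π / 2 * Real.sin ((l:ℝ) * π / 2 * σ)))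
              + (1/2) * Real.cos ((l:ℝ) * π / 2 * σ)) := by
      funext σ
      rw [deriv_psi_odd l hlo, psi_eq_even k hke, psi_eq_odd l hlo]
    constructor
    · rintro (rfl | hpar)
      · omega
      · have hne : k ≠ l := by omega
        rw [hfun]
        exact int_eo _ _ _ _ hp0 (hq0 hne) rfl rfl
    · intro hne hpar
      omega
  -- k odd, l even
  · have hk2 := Nat.odd_iff.mp hko
    have hl2 := Nat.even_iff.mp hle
    have hfun : (fun σ : ℝ => psi k σ * (σ * deriv (psi l) σ + (1 / 2) * psi l σ))
        = fun σ : ℝ => Real.cos ((k:ℝ) * π / 2 * σ) *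
            (σ * ((l:ℝ) * π / 2 * Real.cos ((l:ℝ) * π / 2 * σ))
              + (1/2) * Real.sin ((l:ℝ) * π / 2 * σ)) := by
      funext σ
      rw [deriv_psi_even l hle, psi_eq_odd k hko, psi_eq_even l hle]
    constructor
    · rintro (rfl | hpar)
      · omega
      · have hne : k ≠ l := by omega
        rw [hfun]
        exact int_oe _ _ _ _ hp0 (hq0 hne) rfl rfl
    · intro hne hpar
      omega
  -- k odd, l odd
  · have hk2 := Nat.odd_iff.mp hko
    have hl2 := Nat.odd_iff.mp hlo
    have hfun : (fun σ : ℝ => psi k σ * (σ * deriv (psi l) σ + (1 / 2) * psi l σ))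
        = fun σ : ℝ => Real.cos ((k:ℝ) * π / 2 * σ) *
            (σ * (-((l:ℝ) * π / 2 * Real.sin ((l:ℝ) * π / 2 * σ)))
              + (1/2) * Real.cos ((l:ℝ) * π / 2 * σ)) := by
      funext σ
      rw [deriv_psi_odd l hlo, psi_eq_odd k hko, psi_eq_odd l hlo]
    constructor
    · rintro (rfl | hpar)
      · rw [hfun, int_od]
        obtain ⟨j, hj⟩ := hko
        have hcast : (k:ℝ) * π / 2 = (j:ℝ) * π + π / 2 := by push_cast [hj]; ring
        rw [hcast, Real.cos_add_pi_div_two, Real.sin_nat_mul_pi]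
        norm_num
      · omega
    · intro hne hpar
      have hdvd : 2 ∣ k + l := by omega
      have hm2 : (k + l) / 2 * 2 = k + l := Nat.div_mul_cancel hdvd
      have hmR : (((k + l) / 2 : ℕ) : ℝ) = ((k:ℝ) + l) / 2 := by
        field_simp
        exact_mod_cast hm2

      have hnR : (((((k + l) / 2 : ℕ) : ℤ) - (k : ℤ) : ℤ) : ℝ) = ((l:ℝ) - k) / 2 := by
        rw [Int.cast_sub, Int.cast_natCast, Int.cast_natCast, hmR]
        ring
      have hlk : (l:ℝ) - k ≠ 0 := sub_ne_zero.mpr (by exact_mod_cast hne.symm)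
      have hpm : ((((k + l) / 2 : ℕ) : ℝ)) * π ≠ 0 :=
        mul_ne_zero (by rw [hmR]; exact div_ne_zero hkl0 two_ne_zero) hπ
      have hqn : (((((k + l) / 2 : ℕ) : ℤ) - (k : ℤ) : ℤ) : ℝ) * π ≠ 0 :=
        mul_ne_zero (by rw [hnR]; exact div_ne_zero hlk two_ne_zero) hπ
      have hpe : ((((k + l) / 2 : ℕ) : ℝ)) * π = (k:ℝ) * π / 2 + (l:ℝ) * π / 2 := by
        rw [hmR]; ring
      have hqe : (((((k + l) / 2 : ℕ) : ℤ) - (k : ℤ) : ℤ) : ℝ) * π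
          = (l:ℝ) * π / 2 - (k:ℝ) * π / 2 := by
        rw [hnR]; ring
      have hsm : Real.sin ((((k + l) / 2 : ℕ) : ℝ) * π) = 0 := Real.sin_nat_mul_pi _
      have hcm : Real.cos ((((k + l) / 2 : ℕ) : ℝ) * π) = (-1 : ℝ) ^ ((k + l) / 2) := by
        simpa using Real.cos_nat_mul_pi_sub 0 ((k + l) / 2)
      have hsn : Real.sin ((((((k + l) / 2 : ℕ) : ℤ) - (k : ℤ) : ℤ) : ℝ) * π) = 0 :=
        Real.sin_int_mul_pi _
      have hcn : Real.cos ((((((k + l) / 2 : ℕ) : ℤ) - (k : ℤ) : ℤ) : ℝ) * π)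
          = (-1 : ℝ) ^ ((k + l) / 2) * (-1 : ℝ) ^ k := by
        rw [cos_neg_one_zpow, zpow_sub₀ (by norm_num : (-1:ℝ) ≠ 0), zpow_natCast, zpow_natCast,
          div_eq_mul_inv, ← inv_pow, inv_neg, inv_one]
      have hden : (l:ℝ) ^ 2 - (k:ℝ) ^ 2 ≠ 0 := by
        have h : (l:ℝ) ^ 2 - (k:ℝ) ^ 2 = ((l:ℝ) - k) * ((k:ℝ) + l) := by ring
        rw [h]
        exact mul_ne_zero hlk hkl0
      rw [hfun, int_oo _ _ _ _ hpm hqn hpe hqe, hsm, hcm, hsn, hcn, hmR, hnR,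
        pow_add, Odd.neg_one_pow hko]
      field_simp
      ring
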